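/- Let σ : ℝ → ℝ be absolutely continuous with 0 ≤ σ'(s) ≤ 1 almost everywhere, applied componentwise, and let A ∈ ℝ^{M×M}, b ∈ ℝ^M. Then the vector field f(z) = -Aᵀ σ(Az + b) satisfies -‖A(z₂ - z₁)‖² ≤ ⟨f(z₂) - f(z₁), z₂ - z₁⟩ ≤ 0 for all z₁, z₂ ∈ ℝ^M. -/

import Mathlib

open Matrix

/-- The gradient-system vector field `f(z) = -Aᵀ σ(Az + b)` with `σ` applied
componentwise. -/
noncomputable def gradSysField {M : ℕ} (σ : ℝ → ℝ) (A : Matrix (Fin M) (Fin M) ℝ)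
    (b : EuclideanSpace ℝ (Fin M)) (z : EuclideanSpace ℝ (Fin M)) :
    EuclideanSpace ℝ (Fin M) :=
  -(Matrix.toEuclideanLin Aᵀ ((EuclideanSpace.equiv (Fin M) ℝ).symm
    fun i => σ ((Matrix.toEuclideanLin A z + b) i)))

/-!
Moving `Aᵀ` across the inner product turns `⟨f(z₂) - f(z₁), z₂ - z₁⟩` into
`-⟨σ(u₂) - σ(u₁), u₂ - u₁⟩` with `uₖ = A zₖ + b`, so `u₂ - u₁ = A (z₂ - z₁)`. Since `σ` is
nondecreasing and 1-Lipschitz, each coordinate term `(σ(a) - σ(c)) (a - c)` lies between `0`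
and `(a - c)²`; summing gives both bounds.
-/

open scoped RealInnerProductSpace

theorem Matrix.inner_toEuclideanLin_transpose {m n : Type*} [Fintype m] [Fintype n]
    [DecidableEq m] [DecidableEq n] (A : Matrix m n ℝ) (x : EuclideanSpace ℝ m)
    (y : EuclideanSpace ℝ n) :
    ⟪toEuclideanLin Aᵀ x, y⟫ = ⟪x, toEuclideanLin A y⟫ := by
  rw [← conjTranspose_eq_transpose_of_trivial, toEuclideanLin_conjTranspose_eq_adjoint,
    LinearMap.adjoint_inner_left]

theorem sub_mul_sub_mem_Icc {σ : ℝ → ℝ}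
    (hσ : ∀ s t : ℝ, t ≤ s → σ s - σ t ∈ Set.Icc 0 (s - t)) (a c : ℝ) :
    (a - c) * (σ a - σ c) ∈ Set.Icc 0 ((a - c) * (a - c)) := by
  rcases le_total c a with h | h
  · obtain ⟨h₀, h₁⟩ := hσ a c h
    exact ⟨by nlinarith, by nlinarith⟩
  · obtain ⟨h₀, h₁⟩ := hσ c a h
    exact ⟨by nlinarith, by nlinarith⟩

theorem inner_map_sub_map_mem_Icc {ι : Type*} [Fintype ι] {σ : ℝ → ℝ}
    (hσ : ∀ s t : ℝ, t ≤ s → σ s - σ t ∈ Set.Icc 0 (s - t)) (u v : EuclideanSpace ℝ ι) :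
    ⟪(EuclideanSpace.equiv ι ℝ).symm (fun i => σ (u i)) -
        (EuclideanSpace.equiv ι ℝ).symm (fun i => σ (v i)), u - v⟫
      ∈ Set.Icc 0 (‖u - v‖ ^ 2) := by
  rw [← real_inner_self_eq_norm_sq]
  simp only [PiLp.inner_apply, PiLp.sub_apply, EuclideanSpace.equiv,
    PiLp.continuousLinearEquiv_symm_apply, RCLike.inner_apply, conj_trivial]
  exact ⟨Finset.sum_nonneg fun i _ => (sub_mul_sub_mem_Icc hσ (u i) (v i)).1,
    Finset.sum_le_sum fun i _ => (sub_mul_sub_mem_Icc hσ (u i) (v i)).2⟩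

theorem inner_gradSysField_sub_gradSysField {M : ℕ} (σ : ℝ → ℝ)
    (A : Matrix (Fin M) (Fin M) ℝ) (b z₁ z₂ : EuclideanSpace ℝ (Fin M)) :
    ⟪gradSysField σ A b z₂ - gradSysField σ A b z₁, z₂ - z₁⟫ =
      -⟪(EuclideanSpace.equiv (Fin M) ℝ).symm (fun i => σ ((toEuclideanLin A z₂ + b) i)) -
        (EuclideanSpace.equiv (Fin M) ℝ).symm (fun i => σ ((toEuclideanLin A z₁ + b) i)),
        toEuclideanLin A (z₂ - z₁)⟫ := by
  simp only [gradSysField, neg_sub_neg, ← map_sub, Matrix.inner_toEuclideanLin_transpose]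
  rw [← inner_neg_left, ← map_neg, neg_sub]

theorem gradSysField_onesided_bounds {M : ℕ} (σ : ℝ → ℝ)
    (hσ : ∀ s t : ℝ, t ≤ s → σ s - σ t ∈ Set.Icc 0 (s - t))
    (A : Matrix (Fin M) (Fin M) ℝ) (b : EuclideanSpace ℝ (Fin M)) :
    ∀ z₁ z₂ : EuclideanSpace ℝ (Fin M),
      -‖Matrix.toEuclideanLin A (z₂ - z₁)‖ ^ 2
          ≤ (@inner ℝ _ _ (gradSysField σ A b z₂ - gradSysField σ A b z₁) (z₂ - z₁)) ∧
      (@inner ℝ _ _ (gradSysField σ A b z₂ - gradSysField σ A b z₁) (z₂ - z₁)) ≤ 0 := by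
  intro z₁ z₂
  have h := inner_map_sub_map_mem_Icc hσ (toEuclideanLin A z₂ + b) (toEuclideanLin A z₁ + b)
  rw [add_sub_add_right_eq_sub, ← map_sub] at h
  rw [inner_gradSysField_sub_gradSysField]
  exact ⟨neg_le_neg h.2, neg_nonpos.2 h.1⟩
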